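/- Let G be a group, ℓ ≥ 2, and let d = [x₁,…,x_ℓ] be an element of the set 𝒟_ℓ of commutators of length ℓ of maximal order in G. If the order of d is a prime power, then G is d-stable (with respect to the fixed expression d = [x₁,…,x_ℓ]). -/
import Mathlib


namespace ArXiv

variable {G : Type*} [Group G]

/-- The commutator `[a,b] = a⁻¹b⁻¹ab`. -/
def comm (a b : G) : G := a⁻¹ * b⁻¹ * a * b

/-- The left-normed commutator `[x₁,…,x_ℓ]` of a list of elements. -/
def leftComm : List G → G
  | [] => 1
  | x :: xs => xs.foldl comm x

/-- `g` is a commutator of length `ℓ`, i.e. `g = [x₁,…,x_ℓ]` for some elements. -/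
def IsCommOfLength (ℓ : ℕ) (g : G) : Prop :=
  ∃ x : Fin ℓ → G, g = leftComm (List.ofFn x)

open scoped Classical in
/-- The order of an element, as an extended natural number (`⊤` for infinite order). -/
noncomputable def extOrder (g : G) : ℕ∞ :=
  if IsOfFinOrder g then (orderOf g : ℕ∞) else ⊤

/-- `𝒟_ℓ` : the set of commutators of length `ℓ` of maximal order in `G`. -/
def maxComms (ℓ : ℕ) (G : Type*) [Group G] : Set G :=
  {d | IsCommOfLength ℓ d ∧ ∀ c : G, IsCommOfLength ℓ c → extOrder c ≤ extOrder d}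

/-- A group is residually finite. -/
def ResiduallyFinite (G : Type*) [Group G] : Prop :=
  ∀ g : G, g ≠ 1 → ∃ N : Subgroup G, N.Normal ∧ N.FiniteIndex ∧ g ∉ N

/-- `G` can be generated by `r` elements. -/
def GeneratedBy (r : ℕ) (G : Type*) [Group G] : Prop :=
  ∃ S : Finset G, S.card ≤ r ∧ Subgroup.closure (S : Set G) = ⊤

/-- `φ_I(y)` : the commutator `[z₁,…,z_ℓ]` where `z_i = y_i` for `i ∈ I` and `z_i = x_i`
otherwise. -/
def phi {ℓ : ℕ} (x : Fin ℓ → G) (I : Finset (Fin ℓ)) (y : Fin ℓ → G) : G :=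
  leftComm (List.ofFn fun j => if j ∈ I then y j else x j)

/-- `φ_I(M)^G` : the set of all `G`-conjugates of values `φ_I(y)` with the `y_i` in `M`. -/
def phiConj {ℓ : ℕ} (x : Fin ℓ → G) (I : Finset (Fin ℓ)) (M : Subgroup G) : Set G :=
  {g | ∃ (y : Fin ℓ → G) (h : G), (∀ j ∈ I, y j ∈ M) ∧ g = h⁻¹ * phi x I y * h}

/-- `G` is `d`-stable with respect to the fixed expression `d = [x₁,…,x_ℓ]`. Note that
`Fin ℓ` index `j` corresponds to the paper's index `j+1 ∈ {1,…,ℓ}`. -/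
def DStable {ℓ : ℕ} (x : Fin ℓ → G) (D : Subgroup G) : Prop :=
  ∀ k : ℕ, k ≤ ℓ → ∀ N : Subgroup G, N.Normal →
    N ≤ Subgroup.centralizer {leftComm (List.ofFn x)} →
    (∀ I : Finset (Fin ℓ), I.Nonempty → (∀ j ∈ I, k ≤ (j : ℕ)) →
      ∀ y : Fin ℓ → G, (∀ j ∈ I, y j ∈ N) → phi x I y = 1) →
    ∀ I : Finset (Fin ℓ), (∀ j ∈ I, k ≤ (j : ℕ)) →
      ∀ y : Fin ℓ → G, (∀ j, y j ∈ N) →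
        leftComm (List.ofFn fun j => if (j : ℕ) + 1 = k ∨ j ∈ I then x j * y j else x j) ∈ D

/-- The lexicographic-like order on subsets of `{1,…,ℓ}` : `I < J` iff the smallest index
at which `I` and `J` differ belongs to `J`. -/
def LexLike {ℓ : ℕ} (I J : Finset (Fin ℓ)) : Prop :=
  ∃ t ∈ J, t ∉ I ∧ ∀ s : Fin ℓ, s < t → (s ∈ I ↔ s ∈ J)

/-- A group is locally residually finite. -/
def LocallyResiduallyFinite (G : Type*) [Group G] : Prop :=
  ∀ H : Subgroup G, H.FG → ResiduallyFinite H

/-- A group is locally nilpotent. -/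
def LocallyNilpotent (G : Type*) [Group G] : Prop :=
  ∀ H : Subgroup G, H.FG → Group.IsNilpotent H

/-! ### Auxiliary machinery for Proposition 4.3(i) -/

set_option linter.unusedSectionVars false

/-- Conjugation `h⁻¹ * a * h`. -/
private def cjg (a h : G) : G := h⁻¹ * a * h

private lemma cjg_one_left (h : G) : cjg 1 h = 1 := by simp [cjg]

private lemma comm_one_left (v : G) : comm (1 : G) v = 1 := by simp [comm]

private lemma comm_mul_left (a b v : G) :
    comm (a * b) v = cjg (comm a v) b * comm b v := by
  simp only [comm, cjg]; group

private lemma comm_mul_right (g u w : G) :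
    comm g (u * w) = comm g w * cjg (comm g u) w := by
  simp only [comm, cjg]; group

private lemma comm_cjg_left (g h v : G) :
    comm (cjg g h) v = cjg (comm g (cjg v h⁻¹)) h := by
  simp only [comm, cjg]; group

private lemma comm_inv_left (a v : G) :
    comm a⁻¹ v = cjg (comm a v)⁻¹ a⁻¹ := by
  simp only [comm, cjg]; group

private lemma cjg_comm (a b h : G) : cjg (comm a b) h = comm (cjg a h) (cjg b h) := by
  simp only [comm, cjg]; group

private lemma step_identity (f γ dm τ xx ww : G) :
    comm (f * γ * cjg dm τ) (xx * ww) =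
      cjg (comm f (xx * ww)) (γ * cjg dm τ) *
      ((comm γ (xx * ww)) * (cjg (comm dm (cjg (comm γ (xx * ww)) τ⁻¹)) τ)⁻¹ *
        cjg (comm dm (cjg τ xx * ww * τ⁻¹)) τ) *
      cjg (comm dm xx) (cjg τ xx * ww * τ⁻¹ * τ) := by
  simp only [comm, cjg]; group

section Memb
variable {N : Subgroup G}

private lemma mem_cjg (hN : N.Normal) {n : G} (hn : n ∈ N) (g : G) : cjg n g ∈ N := by
  simpa [cjg, mul_assoc] using hN.conj_mem n hn g⁻¹

private lemma mem_comm_right (hN : N.Normal) (g : G) {n : G} (hn : n ∈ N) :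
    comm g n ∈ N := by
  have h1 : g⁻¹ * n⁻¹ * g ∈ N := by
    simpa [mul_assoc] using hN.conj_mem n⁻¹ (inv_mem hn) g⁻¹
  have h2 : comm g n = g⁻¹ * n⁻¹ * g * n := by simp only [comm]
  rw [h2]; exact mul_mem h1 hn

private lemma mem_comm_left (hN : N.Normal) {n : G} (hn : n ∈ N) (g : G) :
    comm n g ∈ N := by
  have h1 : g⁻¹ * n * g ∈ N := by
    simpa [mul_assoc] using hN.conj_mem n hn g⁻¹
  have h2 : comm n g = n⁻¹ * (g⁻¹ * n * g) := by simp only [comm]; group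
  rw [h2]; exact mul_mem (inv_mem hn) h1

end Memb

/-- Iterated prefix commutator of the entries `e 0, e 1, …, e m`. -/
private def pfx (e : ℕ → G) : ℕ → G
  | 0 => e 0
  | m + 1 => comm (pfx e m) (e (m + 1))

private lemma pfx_succ (e : ℕ → G) (m : ℕ) : pfx e (m + 1) = comm (pfx e m) (e (m + 1)) := rfl

private lemma pfx_congr {e e' : ℕ → G} : ∀ m, (∀ i, i ≤ m → e i = e' i) → pfx e m = pfx e' m
  | 0, h => h 0 le_rfl
  | m + 1, h => by
      simp only [pfx]
      rw [pfx_congr m (fun i hi => h i (hi.trans (Nat.le_succ m))), h (m + 1) le_rfl]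

private lemma pfx_mem {N : Subgroup G} (hN : N.Normal) (e : ℕ → G) :
    ∀ m j, j ≤ m → e j ∈ N → pfx e m ∈ N := by
  intro m
  induction m with
  | zero => intro j hj he; rw [Nat.le_zero] at hj; subst hj; exact he
  | succ m ih =>
    intro j hj he
    rcases Nat.lt_or_ge j (m + 1) with h | h
    · exact mem_comm_left hN (ih j (by omega) he) _
    · have : j = m + 1 := by omega
      subst this
      exact mem_comm_right hN _ he

private lemma leftComm_nil : leftComm ([] : List G) = 1 := rfl

private lemma leftComm_cons (a : G) (l : List G) : leftComm (a :: l) = l.foldl comm a := rfl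

private lemma foldl_comm_cjg (h : G) : ∀ (l : List G) (a : G),
    cjg (List.foldl comm a l) h = List.foldl comm (cjg a h) (l.map (fun b => cjg b h))
  | [], a => rfl
  | b :: l, a => by
      simp only [List.foldl_cons, List.map_cons]
      rw [foldl_comm_cjg h l (comm a b), cjg_comm]

private lemma leftComm_map_cjg (h : G) : ∀ l : List G,
    cjg (leftComm l) h = leftComm (l.map (fun b => cjg b h))
  | [] => by simp [leftComm_nil, cjg_one_left]
  | a :: l => by
      simp only [List.map_cons, leftComm_cons]
      exact foldl_comm_cjg h l a

private lemma leftComm_concat (a : G) : ∀ (l : List G), l ≠ [] →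
    leftComm (l ++ [a]) = comm (leftComm l) a
  | [], h => absurd rfl h
  | b :: l, _ => by simp [leftComm_cons, List.foldl_append]

private lemma pfx_eq_leftComm (e : ℕ → G) :
    ∀ m, pfx e m = leftComm ((List.range (m + 1)).map e)
  | 0 => by simp [pfx, List.range_succ, leftComm_cons]
  | m + 1 => by
      rw [List.range_succ, List.map_append, List.map_singleton]
      rw [leftComm_concat _ _ (by simp [← List.length_pos_iff])]
      rw [← pfx_eq_leftComm e m]
      rfl

private lemma ofFn_eq_map_range {n : ℕ} (F : Fin n → G) (e : ℕ → G)
    (he : ∀ i (h : i < n), e i = F ⟨i, h⟩) :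
    List.ofFn F = (List.range n).map e := by
  apply List.ext_getElem (by simp)
  intro i h1 h2
  have hi : i < n := by simpa using h1
  simp only [List.getElem_ofFn, List.getElem_map, List.getElem_range]
  rw [he i hi]

private lemma leftComm_ofFn {n : ℕ} (hn : n ≠ 0) (F : Fin n → G) (e : ℕ → G)
    (he : ∀ i (h : i < n), e i = F ⟨i, h⟩) :
    leftComm (List.ofFn F) = pfx e (n - 1) := by
  have h : n - 1 + 1 = n := by omega
  rw [ofFn_eq_map_range F e he, pfx_eq_leftComm, h]

/-- "Dead" elements: killed by all continuations with entries in the cosets `x_i N`. -/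
private def Dead (N : Subgroup G) (x' : ℕ → G) : List ℕ → G → Prop
  | [], g => g = 1
  | i :: is, g => g ∈ N ∧ ∀ n ∈ N, Dead N x' is (comm g (x' i * n))

/-- "Purely dead" elements: killed by all continuations with entries `x_i` or in `N`. -/
private def PDead (N : Subgroup G) (x' : ℕ → G) : List ℕ → G → Prop
  | [], g => g = 1
  | i :: is, g => g ∈ N ∧ PDead N x' is (comm g (x' i)) ∧ ∀ n ∈ N, PDead N x' is (comm g n)

private lemma dead_one (N : Subgroup G) (x' : ℕ → G) : ∀ is, Dead N x' is (1 : G)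
  | [] => rfl
  | i :: is => ⟨one_mem N, fun n _ => by rw [comm_one_left]; exact dead_one N x' is⟩

private lemma dead_cjg {N : Subgroup G} (hN : N.Normal) (x' : ℕ → G) (is : List ℕ) :
    ∀ {g : G}, Dead N x' is g → ∀ {n : G}, n ∈ N → Dead N x' is (cjg g n) := by
  induction is with
  | nil => intro g hg n _; simp only [Dead] at hg ⊢; rw [hg, cjg_one_left]
  | cons i is ih =>
    intro g hg n hn
    simp only [Dead] at hg ⊢
    refine ⟨mem_cjg hN hg.1 n, fun n' hn' => ?_⟩
    have key : comm (cjg g n) (x' i * n') =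
        cjg (comm g (x' i * (cjg n (x' i) * n' * n⁻¹))) n := by
      rw [comm_cjg_left]
      congr 1
      simp only [cjg]; group
    rw [key]
    exact ih (hg.2 _ (mul_mem (mul_mem (mem_cjg hN hn _) hn') (inv_mem hn))) hn

private lemma dead_mul {N : Subgroup G} (hN : N.Normal) (x' : ℕ → G) (is : List ℕ) :
    ∀ {a b : G}, Dead N x' is a → Dead N x' is b → Dead N x' is (a * b) := by
  induction is with
  | nil => intro a b ha hb; simp only [Dead] at *; rw [ha, hb, one_mul]
  | cons i is ih =>
    intro a b ha hb
    simp only [Dead] at *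
    refine ⟨mul_mem ha.1 hb.1, fun n hn => ?_⟩
    rw [comm_mul_left]
    exact ih (dead_cjg hN x' is (ha.2 n hn) hb.1) (hb.2 n hn)

private lemma dead_inv {N : Subgroup G} (hN : N.Normal) (x' : ℕ → G) (is : List ℕ) :
    ∀ {a : G}, Dead N x' is a → Dead N x' is a⁻¹ := by
  induction is with
  | nil => intro a ha; simp only [Dead] at *; rw [ha, inv_one]
  | cons i is ih =>
    intro a ha
    simp only [Dead] at *
    refine ⟨inv_mem ha.1, fun n hn => ?_⟩
    rw [comm_inv_left]
    exact dead_cjg hN x' is (ih (ha.2 n hn)) (inv_mem ha.1)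

private lemma pdead_dead {N : Subgroup G} (hN : N.Normal) (x' : ℕ → G) (is : List ℕ) :
    ∀ {g : G}, PDead N x' is g → Dead N x' is g := by
  induction is with
  | nil => intro g hg; exact hg
  | cons i is ih =>
    intro g hg
    simp only [PDead] at hg
    simp only [Dead]
    refine ⟨hg.1, fun n hn => ?_⟩
    rw [comm_mul_right]
    exact dead_mul hN x' is (ih (hg.2.2 n hn)) (dead_cjg hN x' is (ih hg.2.1) hn)

section Core

variable {ℓ : ℕ}

private def xlift (x : Fin ℓ → G) : ℕ → G := fun i => if h : i < ℓ then x ⟨i, h⟩ else 1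

private lemma aux_pdead (x : Fin ℓ → G) (N : Subgroup G) (hN : N.Normal) (k : ℕ)
    (hΦ : ∀ I : Finset (Fin ℓ), I.Nonempty → (∀ j ∈ I, k ≤ (j : ℕ)) →
      ∀ y : Fin ℓ → G, (∀ j ∈ I, y j ∈ N) → phi x I y = 1) :
    ∀ t s, s + 1 + t = ℓ → ∀ (E : ℕ → G) (J : Finset (Fin ℓ)), J.Nonempty →
      (∀ j : Fin ℓ, j ∈ J → E (j : ℕ) ∈ N ∧ k ≤ (j : ℕ) ∧ (j : ℕ) < s + 1) →
      (∀ j : Fin ℓ, (j : ℕ) < s + 1 → j ∉ J → E (j : ℕ) = x j) →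
      PDead N (xlift x) (List.range' (s + 1) (ℓ - (s + 1))) (pfx E s) := by
  intro t
  induction t with
  | zero =>
    intro s hs E J hJne hJ hnJ
    have h0 : ℓ - (s + 1) = 0 := by omega
    rw [h0, List.range'_zero]
    have he : ∀ i (h : i < ℓ), E i = (fun j : Fin ℓ => if j ∈ J then E (j : ℕ) else x j) ⟨i, h⟩ := by
      intro i h
      by_cases hmem : (⟨i, h⟩ : Fin ℓ) ∈ J
      · simp [hmem]
      · simp only [hmem, if_false]
        exact hnJ ⟨i, h⟩ (by omega) hmem
    have hval := leftComm_ofFn (n := ℓ) (by omega)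
      (fun j : Fin ℓ => if j ∈ J then E (j : ℕ) else x j) E he
    have hphi := hΦ J hJne (fun j hj => (hJ j hj).2.1) (fun j => E (j : ℕ)) (fun j hj => (hJ j hj).1)
    rw [phi] at hphi
    show PDead N (xlift x) [] (pfx E s)
    simp only [PDead]
    have hsl : ℓ - 1 = s := by omega
    rw [← hsl, ← hval, hphi]
  | succ t iht =>
    intro s hs E J hJne hJ hnJ
    have hsl : s + 1 < ℓ := by omega
    have hcons : List.range' (s + 1) (ℓ - (s + 1)) =
        (s + 1) :: List.range' (s + 1 + 1) (ℓ - (s + 1 + 1)) := by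
      rw [show ℓ - (s + 1) = (ℓ - (s + 1 + 1)) + 1 by omega, List.range'_succ]
    rw [hcons]
    simp only [PDead]
    obtain ⟨j0, hj0⟩ := hJne
    have hj0' := hJ j0 hj0
    refine ⟨pfx_mem hN E s (j0 : ℕ) (by omega) hj0'.1, ?_, ?_⟩
    · -- continuation by the pure entry x_{s+1}
      have hval : comm (pfx E s) (xlift x (s + 1)) =
          pfx (fun i => if i = s + 1 then xlift x (s + 1) else E i) (s + 1) := by
        have h1 : pfx E s = pfx (fun i => if i = s + 1 then xlift x (s + 1) else E i) s :=
          pfx_congr s (fun i hi => by rw [if_neg (by omega)])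
        simp only [pfx]
        rw [← h1]
        simp
      rw [hval]
      refine iht (s + 1) (by omega) _ J ⟨j0, hj0⟩ ?_ ?_
      · intro j hj
        have h := hJ j hj
        refine ⟨?_, h.2.1, by omega⟩
        rw [if_neg (by omega)]
        exact h.1
      · intro j hjlt hjn
        by_cases hcase : (j : ℕ) = s + 1
        · rw [if_pos hcase]
          have hj' : j = (⟨s + 1, hsl⟩ : Fin ℓ) := Fin.ext hcase
          subst hj'
          simp only [xlift]
          rw [dif_pos hsl]
        · rw [if_neg hcase]
          exact hnJ j (by omega) hjn
    · -- continuation by an entry of N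
      intro n hn
      have hval : comm (pfx E s) n = pfx (fun i => if i = s + 1 then n else E i) (s + 1) := by
        have h1 : pfx E s = pfx (fun i => if i = s + 1 then n else E i) s :=
          pfx_congr s (fun i hi => by rw [if_neg (by omega)])
        simp only [pfx]
        rw [← h1]
        simp
      rw [hval]
      refine iht (s + 1) (by omega) _ (insert ⟨s + 1, hsl⟩ J)
        ⟨_, Finset.mem_insert_self _ _⟩ ?_ ?_
      · intro j hj
        rcases Finset.mem_insert.mp hj with h | h
        · subst h
          refine ⟨?_, by simp only [Fin.val_mk]; omega, by simp only [Fin.val_mk]; omega⟩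
          simp only [Fin.val_mk]
          simpa using hn
        · have hjlt : (j : ℕ) < s + 1 := (hJ j h).2.2
          refine ⟨?_, (hJ j h).2.1, by omega⟩
          rw [if_neg (by omega)]
          exact (hJ j h).1
      · intro j hjlt hjn
        have hne : (j : ℕ) ≠ s + 1 := fun hh => hjn (Finset.mem_insert.mpr (Or.inl (Fin.ext hh)))
        rw [if_neg hne]
        exact hnJ j (by omega) (fun hc => hjn (Finset.mem_insert.mpr (Or.inr hc)))

private lemma hyp_dead (x : Fin ℓ → G) (N : Subgroup G) (hN : N.Normal) (k : ℕ)
    (hΦ : ∀ I : Finset (Fin ℓ), I.Nonempty → (∀ j ∈ I, k ≤ (j : ℕ)) →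
      ∀ y : Fin ℓ → G, (∀ j ∈ I, y j ∈ N) → phi x I y = 1)
    {m : ℕ} (hk : k ≤ m + 1) (hm : m + 1 < ℓ) {n : G} (hn : n ∈ N) :
    Dead N (xlift x) (List.range' (m + 1 + 1) (ℓ - (m + 1 + 1))) (comm (pfx (xlift x) m) n) := by
  apply pdead_dead hN
  have hval : pfx (fun i => if i = m + 1 then n else xlift x i) (m + 1) =
      comm (pfx (xlift x) m) n := by
    have h1 : pfx (fun i => if i = m + 1 then n else xlift x i) m = pfx (xlift x) m :=
      pfx_congr m (fun i hi => by rw [if_neg (by omega)])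
    simp only [pfx]
    rw [h1]
    simp
  rw [← hval]
  refine aux_pdead x N hN k hΦ (ℓ - (m + 1 + 1)) (m + 1) (by omega) _ {⟨m + 1, hm⟩}
    ⟨_, Finset.mem_singleton_self _⟩ ?_ ?_
  · intro j hj
    rw [Finset.mem_singleton] at hj
    subst hj
    refine ⟨?_, by simp only [Fin.val_mk]; omega, by simp only [Fin.val_mk]; omega⟩
    simp only [Fin.val_mk]
    simpa using hn
  · intro j hjlt hjn
    have hne : (j : ℕ) ≠ m + 1 := fun hh => hjn (by rw [Finset.mem_singleton]; exact Fin.ext hh)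
    rw [if_neg hne]
    simp [xlift]

private lemma main_core (x : Fin ℓ → G) (N : Subgroup G) (hN : N.Normal) (k : ℕ)
    (hΦ : ∀ I : Finset (Fin ℓ), I.Nonempty → (∀ j ∈ I, k ≤ (j : ℕ)) →
      ∀ y : Fin ℓ → G, (∀ j ∈ I, y j ∈ N) → phi x I y = 1)
    (m₀ : ℕ) (hk : k ≤ m₀ + 1)
    (w : ℕ → G) (hw : ∀ i, w i ∈ N) (hw0 : ∀ i, i < m₀ → w i = 1) :
    ∀ t m, m = m₀ + t → m < ℓ →
      ∃ (f γ τ : G) (L : List G), L ≠ [] ∧ L.length = m + 1 ∧ f = leftComm L ∧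
        f ∈ N ∧ τ ∈ N ∧ Dead N (xlift x) (List.range' (m + 1) (ℓ - (m + 1))) γ ∧
        pfx (fun i => xlift x i * w i) m = f * γ * cjg (pfx (xlift x) m) τ := by
  intro t
  induction t with
  | zero =>
    intro m hm hml
    have hm2 : m = m₀ := by omega
    subst hm2
    cases m with
    | zero =>
      refine ⟨w 0, 1, w 0, [w 0], by simp, by simp, rfl, hw 0, hw 0, dead_one N (xlift x) _, ?_⟩
      show xlift x 0 * w 0 = w 0 * 1 * cjg (xlift x 0) (w 0)
      simp only [cjg]; group
    | succ s =>
      have h1 : pfx (fun i => xlift x i * w i) s = pfx (xlift x) s :=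
        pfx_congr s (fun i hi => by rw [hw0 i (by omega), mul_one])
      refine ⟨comm (pfx (xlift x) s) (w (s + 1)), 1, w (s + 1),
        ((List.range (s + 1)).map (xlift x)) ++ [w (s + 1)], by simp, by simp,
        ?_, mem_comm_right hN _ (hw _), hw _, dead_one N (xlift x) _, ?_⟩
      · rw [leftComm_concat _ _ (by simp [← List.length_pos_iff]), ← pfx_eq_leftComm]
      · rw [pfx_succ, pfx_succ, h1, mul_one]
        exact comm_mul_right (pfx (xlift x) s) (xlift x (s + 1)) (w (s + 1))
  | succ t iht =>
    intro m hm hml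
    have hm2 : m = m₀ + t + 1 := by omega
    subst hm2
    obtain ⟨f, γ, τ, L, hLne, hLlen, hfL, hfN, hτN, hγD, heq⟩ := iht (m₀ + t) rfl (by omega)
    set m' := m₀ + t with hm'
    set x' := xlift x with hx'
    set dm := pfx x' m' with hdm
    set xx := x' (m' + 1) with hxx
    set ww := w (m' + 1) with hww
    have hn₁ : cjg τ xx * ww * τ⁻¹ ∈ N :=
      mul_mem (mul_mem (mem_cjg hN hτN _) (hw _)) (inv_mem hτN)
    have hlist : List.range' (m' + 1) (ℓ - (m' + 1)) =
        (m' + 1) :: List.range' (m' + 1 + 1) (ℓ - (m' + 1 + 1)) := by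
      rw [show ℓ - (m' + 1) = (ℓ - (m' + 1 + 1)) + 1 by omega, List.range'_succ]
    rw [hlist] at hγD
    simp only [Dead] at hγD
    obtain ⟨hγN, hγcont⟩ := hγD
    have hXD := hγcont ww (hw _)
    have hXN : comm γ (xx * ww) ∈ N := mem_comm_left hN hγN _
    have hD1 := hyp_dead x N hN k hΦ (show k ≤ m' + 1 by omega) (show m' + 1 < ℓ by omega)
      (mem_cjg hN hXN τ⁻¹)
    have hD2 := hyp_dead x N hN k hΦ (show k ≤ m' + 1 by omega) (show m' + 1 < ℓ by omega) hn₁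
    refine ⟨cjg (comm f (xx * ww)) (γ * cjg dm τ),
      (comm γ (xx * ww) * (cjg (comm dm (cjg (comm γ (xx * ww)) τ⁻¹)) τ)⁻¹) *
        cjg (comm dm (cjg τ xx * ww * τ⁻¹)) τ,
      (cjg τ xx * ww * τ⁻¹) * τ,
      (L ++ [xx * ww]).map (fun b => cjg b (γ * cjg dm τ)),
      by simp, by simp [hLlen], ?_,
      mem_cjg hN (mem_comm_left hN hfN _) _,
      mul_mem hn₁ hτN, ?_, ?_⟩
    · rw [← leftComm_map_cjg, leftComm_concat _ _ hLne, ← hfL]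
    · exact dead_mul hN x' _
        (dead_mul hN x' _ hXD (dead_inv hN x' _ (dead_cjg hN x' _ hD1 hτN)))
        (dead_cjg hN x' _ hD2 hτN)
    · rw [pfx_succ, heq]
      exact step_identity f γ dm τ xx ww
  
end Core

/-! ### Order-theoretic facts -/

private lemma extOrder_le_fin {d g : G} (hfin : IsOfFinOrder d)
    (h : extOrder g ≤ extOrder d) : IsOfFinOrder g ∧ orderOf g ≤ orderOf d := by
  classical
  unfold extOrder at h
  rw [if_pos hfin] at h
  by_cases hg : IsOfFinOrder g
  · rw [if_pos hg] at h
    exact ⟨hg, by exact_mod_cast h⟩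
  · rw [if_neg hg] at h
    rw [top_le_iff] at h
    exact absurd h.symm (by simp)

private lemma extOrder_eq_of_orderOf_eq {d g : G} (hfind : IsOfFinOrder d)
    (hfing : IsOfFinOrder g) (h : orderOf g = orderOf d) : extOrder g = extOrder d := by
  classical
  unfold extOrder
  rw [if_pos hfind, if_pos hfing, h]

/-- Proposition 4.3(i): if `d = [x₁,…,x_ℓ] ∈ 𝒟_ℓ` has prime-power order,
then `G` is `d`-stable. -/
theorem stmt10 (G : Type*) [Group G] (ℓ : ℕ) (hℓ : 2 ≤ ℓ) (x : Fin ℓ → G)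
    (hd : leftComm (List.ofFn x) ∈ maxComms ℓ G)
    (hord : IsPrimePow (orderOf (leftComm (List.ofFn x)))) :
    DStable x (Subgroup.closure (maxComms ℓ G)) := by
  classical
  intro k hk N hNn hcen hΦ I hI y hy
  by_cases hS : ∃ j : Fin ℓ, ((j : ℕ) + 1 = k ∨ j ∈ I)
  case neg =>
    have hz : (fun j : Fin ℓ => if (j : ℕ) + 1 = k ∨ j ∈ I then x j * y j else x j) = x :=
      funext fun j => if_neg (fun h => hS ⟨j, h⟩)
    rw [hz]
    exact Subgroup.subset_closure hd
  case pos =>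
    set S : Finset (Fin ℓ) := Finset.univ.filter (fun j => (j : ℕ) + 1 = k ∨ j ∈ I) with hSdef
    have hSne : S.Nonempty := by
      obtain ⟨j, hj⟩ := hS
      exact ⟨j, by simp [hSdef, hj]⟩
    set j₀ := S.min' hSne with hj₀def
    have hj₀P : ((j₀ : ℕ) + 1 = k ∨ j₀ ∈ I) := by
      have := S.min'_mem hSne
      simp only [hSdef, Finset.mem_filter] at this
      exact this.2
    have hmin : ∀ j : Fin ℓ, ((j : ℕ) + 1 = k ∨ j ∈ I) → j₀ ≤ j := by
      intro j hj
      exact S.min'_le j (by simp [hSdef, hj])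
    set m₀ := (j₀ : ℕ) with hm₀def
    have hkm₀ : k ≤ m₀ + 1 := by
      rcases hj₀P with h | h
      · omega
      · exact (hI j₀ h).trans (Nat.le_succ _)
    set w : ℕ → G := fun i =>
      if h : i < ℓ then
        (if ((⟨i, h⟩ : Fin ℓ) : ℕ) + 1 = k ∨ (⟨i, h⟩ : Fin ℓ) ∈ I then y ⟨i, h⟩ else 1)
      else 1 with hwdef
    have hwN : ∀ i, w i ∈ N := by
      intro i
      simp only [hwdef]
      split_ifs
      · exact hy _
      · exact one_mem N
      · exact one_mem N
    have hw0 : ∀ i, i < m₀ → w i = 1 := by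
      intro i hi
      have hiℓ : i < ℓ := lt_trans (by omega : i < (j₀ : ℕ)) j₀.isLt
      simp only [hwdef]
      rw [dif_pos hiℓ, if_neg]
      intro hP
      have := hmin ⟨i, hiℓ⟩ hP
      rw [Fin.le_def] at this
      simp only [Fin.val_mk] at this
      omega
    obtain ⟨f, γ, τ, L, hLne, hLlen, hfL, hfN, hτN, hγD, heq⟩ :=
      main_core x N hNn k hΦ m₀ hkm₀ w hwN hw0 (ℓ - 1 - m₀) (ℓ - 1) (by omega) (by omega)
    -- γ = 1
    have hγ1 : γ = 1 := by
      have hnil : List.range' (ℓ - 1 + 1) (ℓ - (ℓ - 1 + 1)) = [] := by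
        rw [show ℓ - (ℓ - 1 + 1) = 0 by omega, List.range'_zero]
      rw [hnil] at hγD
      exact hγD
    -- conversion of the goal commutator
    have hc : leftComm (List.ofFn fun j : Fin ℓ =>
        if (j : ℕ) + 1 = k ∨ j ∈ I then x j * y j else x j) =
        pfx (fun i => xlift x i * w i) (ℓ - 1) := by
      apply leftComm_ofFn (by omega) _ _ ?_
      intro i h
      simp only [hwdef, xlift]
      rw [dif_pos h, dif_pos h]
      by_cases hP : ((⟨i, h⟩ : Fin ℓ) : ℕ) + 1 = k ∨ (⟨i, h⟩ : Fin ℓ) ∈ I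
      · rw [if_pos hP, if_pos hP]
      · rw [if_neg hP, if_neg hP, mul_one]
    have hdpf : pfx (xlift x) (ℓ - 1) = leftComm (List.ofFn x) := by
      symm
      apply leftComm_ofFn (by omega) x (xlift x) ?_
      intro i h
      simp only [xlift]
      rw [dif_pos h]
    have hcjτ : cjg (pfx (xlift x) (ℓ - 1)) τ = leftComm (List.ofFn x) := by
      rw [hdpf]
      have hct := Subgroup.mem_centralizer_iff.mp (hcen hτN) _ (Set.mem_singleton _)
      simp only [cjg]
      rw [mul_assoc, hct, ← mul_assoc, inv_mul_cancel, one_mul]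
    set d := leftComm (List.ofFn x) with hddef
    have hcfd : leftComm (List.ofFn fun j : Fin ℓ =>
        if (j : ℕ) + 1 = k ∨ j ∈ I then x j * y j else x j) = f * d := by
      rw [hc, heq, hγ1, mul_one, hcjτ]
    -- the element c and f are both commutators of length ℓ
    set c := leftComm (List.ofFn fun j : Fin ℓ =>
        if (j : ℕ) + 1 = k ∨ j ∈ I then x j * y j else x j) with hcdef
    have hccomm : IsCommOfLength ℓ c := ⟨_, rfl⟩
    have hfcomm : IsCommOfLength ℓ f := by
      have hLl : L.length = ℓ := by omega
      refine ⟨fun i => L[(i : ℕ)]'(by omega), ?_⟩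
      rw [hfL]
      congr 1
      apply List.ext_getElem (by simp [hLl])
      intro i h1 h2
      simp
    -- order dichotomy
    have hdfin : IsOfFinOrder d := by
      rw [← orderOf_pos_iff]
      exact hord.pos
    obtain ⟨hffin, hfle⟩ := extOrder_le_fin hdfin (hd.2 f hfcomm)
    obtain ⟨hcfin, hcle⟩ := extOrder_le_fin hdfin (hd.2 c hccomm)
    have hcommdf : Commute d f := by
      have := Subgroup.mem_centralizer_iff.mp (hcen hfN) _ (Set.mem_singleton _)
      exact this
    have hcommfc : Commute f⁻¹ c := by
      have h1 : Commute f c := by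
        rw [hcfd]
        exact (Commute.refl f).mul_right hcommdf.symm
      exact h1.inv_left
    have hdec : d = f⁻¹ * c := by rw [hcfd]; group
    have hdvd : orderOf d ∣ Nat.lcm (orderOf f) (orderOf c) := by
      rw [hdec]
      simpa [orderOf_inv] using hcommfc.orderOf_mul_dvd_lcm
    obtain ⟨p, a, hp, ha, hpa⟩ := hord
    have hp' : Nat.Prime p := Nat.prime_iff.mpr hp
    have hf0 : orderOf f ≠ 0 := (orderOf_pos_iff.mpr hffin).ne'
    have hc0 : orderOf c ≠ 0 := (orderOf_pos_iff.mpr hcfin).ne'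
    have hlcm0 : Nat.lcm (orderOf f) (orderOf c) ≠ 0 := Nat.lcm_ne_zero hf0 hc0
    have hple : a ≤ (Nat.lcm (orderOf f) (orderOf c)).factorization p := by
      rw [← Nat.Prime.pow_dvd_iff_le_factorization hp' hlcm0, hpa]
      exact hdvd
    rw [Nat.factorization_lcm hf0 hc0, Finsupp.sup_apply, le_sup_iff] at hple
    have key : ∀ g : G, IsOfFinOrder g → orderOf g ≤ orderOf d →
        a ≤ (orderOf g).factorization p → orderOf g = orderOf d := by
      intro g hgfin hgle hga
      have hdvd' : p ^ a ∣ orderOf g := by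
        rw [Nat.Prime.pow_dvd_iff_le_factorization hp' (orderOf_pos_iff.mpr hgfin).ne']
        exact hga
      have := Nat.le_of_dvd (orderOf_pos_iff.mpr hgfin) hdvd'
      omega
    rcases hple with hfp | hcp
    · -- f has maximal order
      have hford : orderOf f = orderOf d := key f hffin hfle hfp
      have hfmax : f ∈ maxComms ℓ G := by
        refine ⟨hfcomm, fun c' hc' => ?_⟩
        rw [extOrder_eq_of_orderOf_eq hdfin hffin hford]
        exact hd.2 c' hc'
      rw [hcfd]
      exact mul_mem (Subgroup.subset_closure hfmax) (Subgroup.subset_closure hd)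
    · -- c has maximal order
      have hcord : orderOf c = orderOf d := key c hcfin hcle hcp
      have hcmax : c ∈ maxComms ℓ G := by
        refine ⟨hccomm, fun c' hc' => ?_⟩
        rw [extOrder_eq_of_orderOf_eq hdfin hcfin hcord]
        exact hd.2 c' hc'
      exact Subgroup.subset_closure hcmax

end ArXiv
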